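/- arXiv:2602.15303 — 3 statements merged into one kernel-verified Lean document; each statement's English description precedes it below -/
import Mathlib

section
/- Jensen/overlap lower bound on mixture entropy: let p(x) = Σ_{c=1}^K π_c f_c(x) be a mixture density whose components are square-integrable, and set z_{c,d} = ∫_{ℝⁿ} f_c(x) f_d(x) dx (the pairwise overlap integrals). Assume x ↦ p(x) log p(x) is Lebesgue integrable. Then h(p) ≥ -Σ_{c=1}^K π_c log( Σ_{d=1}^K π_d z_{c,d} ). -/
/-!
Since `p = ∑ c, w c * f c`, the entropy integral splits as
`∫ p log p = ∑ c, w c * ∫ f c * log p`. Each `f c` is a probability density, so Jensen's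
inequality for the concave `log` gives `∫ f c * log p ≤ log (∫ f c * p)`, and
`∫ f c * p = ∑ d, w d * z c d`. Jensen is applied through the tangent line of `log` at
`a = ∫ f c * p`, namely `log t ≤ log a + t / a - 1`, integrated against `f c`.
-/

open MeasureTheory Real

section

variable {α : Type*} [MeasurableSpace α] {μ : Measure α}

theorem integral_mul_pos_of_pos_imp_pos {g q : α → ℝ} (hg : ∀ x, 0 ≤ g x)
    (hq : ∀ x, 0 < g x → 0 < q x) (hgq : Integrable (fun x => g x * q x) μ)
    (hg_ne : ∫ x, g x ∂μ ≠ 0) : 0 < ∫ x, g x * q x ∂μ := by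
  have hgq_nonneg : ∀ x, 0 ≤ g x * q x := fun x =>
    (hg x).eq_or_lt.elim (fun h => by rw [← h, zero_mul]) fun h => (mul_pos h (hq x h)).le
  refine (integral_nonneg hgq_nonneg).lt_of_ne fun h0 => hg_ne ?_
  have hgq_zero := (integral_eq_zero_iff_of_nonneg hgq_nonneg hgq).1 h0.symm
  refine integral_eq_zero_of_ae ?_
  filter_upwards [hgq_zero] with x hx
  by_contra hgx
  exact (mul_pos ((hg x).lt_of_ne' hgx) (hq x ((hg x).lt_of_ne' hgx))).ne' hx

theorem mul_log_le_mul_log_add_div_sub {t s a : ℝ} (ht : 0 ≤ t) (hs : 0 < t → 0 < s)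
    (ha : 0 < a) : t * log s ≤ t * log a + t * s / a - t := by
  rcases ht.eq_or_lt with rfl | ht
  · simp
  have hlog := log_le_sub_one_of_pos (div_pos (hs ht) ha)
  rw [log_div (hs ht).ne' ha.ne'] at hlog
  have := mul_le_mul_of_nonneg_left hlog ht.le
  rw [mul_div_assoc]
  linarith

theorem integral_mul_log_le_log_integral_mul {g q : α → ℝ} (hg : ∀ x, 0 ≤ g x)
    (hg_mass : ∫ x, g x ∂μ = 1) (hq : ∀ x, 0 < g x → 0 < q x)
    (hgq : Integrable (fun x => g x * q x) μ)
    (hglog : Integrable (fun x => g x * log (q x)) μ) :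
    ∫ x, g x * log (q x) ∂μ ≤ log (∫ x, g x * q x ∂μ) := by
  set a := ∫ x, g x * q x ∂μ
  have ha : 0 < a := integral_mul_pos_of_pos_imp_pos hg hq hgq (by simp [hg_mass])
  have hg_int : Integrable g μ := Integrable.of_integral_ne_zero (by simp [hg_mass])
  have h_affine_int : Integrable (fun x => g x * log a + g x * q x / a) μ :=
    (hg_int.mul_const _).add (hgq.div_const _)
  calc ∫ x, g x * log (q x) ∂μ
      ≤ ∫ x, (g x * log a + g x * q x / a - g x) ∂μ :=
        integral_mono hglog (h_affine_int.sub hg_int) fun x =>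
          mul_log_le_mul_log_add_div_sub (hg x) (hq x) ha
    _ = log a := by
        rw [integral_sub h_affine_int hg_int,
          integral_add (hg_int.mul_const _) (hgq.div_const _), integral_mul_const,
          integral_div, hg_mass, div_self ha.ne']
        ring

theorem MeasureTheory.Integrable.mul_of_const_mul_le {g u v : α → ℝ} {c : ℝ} (hc : 0 < c)
    (hg : ∀ x, 0 ≤ g x) (hgu : ∀ x, c * g x ≤ u x) (hg_meas : AEStronglyMeasurable g μ)
    (hv_meas : AEStronglyMeasurable v μ) (huv : Integrable (fun x => u x * v x) μ) :
    Integrable (fun x => g x * v x) μ := by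
  refine (huv.norm.const_mul c⁻¹).mono' (hg_meas.mul hv_meas) (ae_of_all _ fun x => ?_)
  have hu : 0 ≤ u x := (mul_nonneg hc.le (hg x)).trans (hgu x)
  rw [norm_mul, norm_mul, norm_of_nonneg (hg x), norm_of_nonneg hu, ← mul_assoc]
  exact mul_le_mul_of_nonneg_right ((le_inv_mul_iff₀ hc).2 (hgu x)) (norm_nonneg _)

variable {ι : Type*} [Fintype ι] {w : ι → ℝ} {f : ι → α → ℝ} {h : α → ℝ}

theorem integrable_sum_mul (hf : ∀ c, Integrable (fun x => f c x * h x) μ) :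
    Integrable (fun x => (∑ c, w c * f c x) * h x) μ := by
  simp_rw [Finset.sum_mul, mul_assoc]
  exact integrable_finsetSum _ fun c _ => (hf c).const_mul (w c)

theorem integral_sum_mul (hf : ∀ c, Integrable (fun x => f c x * h x) μ) :
    ∫ x, (∑ c, w c * f c x) * h x ∂μ = ∑ c, w c * ∫ x, f c x * h x ∂μ := by
  simp_rw [Finset.sum_mul, mul_assoc]
  rw [integral_finsetSum _ fun c _ => (hf c).const_mul (w c)]
  simp_rw [integral_const_mul]

end

theorem mixture_entropy_jensen_overlap_lower_bound_general
    (n K : ℕ)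
    (w : Fin K → ℝ) (hw_pos : ∀ c, 0 < w c)
    (f : Fin K → (Fin n → ℝ) → ℝ)
    (hf_meas : ∀ c, Measurable (f c))
    (hf_nonneg : ∀ c x, 0 ≤ f c x)
    (hf_mass : ∀ c, ∫ x, f c x = 1)
    (hf_sq : ∀ c, Integrable (fun x => f c x ^ 2))
    (p : (Fin n → ℝ) → ℝ) (hp : ∀ x, p x = ∑ c, w c * f c x)
    (z : Fin K → Fin K → ℝ) (hz : ∀ c d, z c d = ∫ x, f c x * f d x)
    (h_int : Integrable (fun x => p x * Real.log (p x))) :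
    (-∑ c, w c * Real.log (∑ d, w d * z c d)) ≤ -∫ x, p x * Real.log (p x) := by
  obtain rfl : p = fun x => ∑ c, w c * f c x := funext hp
  have hf_L2 c : MemLp (f c) 2 := (memLp_two_iff_integrable_sq
    (hf_meas c).aestronglyMeasurable).2 (hf_sq c)
  have hff c d : Integrable (fun x => f d x * f c x) := (hf_L2 d).integrable_mul (hf_L2 c)
  have hf_le_p c x : w c * f c x ≤ ∑ d, w d * f d x :=
    Finset.single_le_sum (fun d _ => mul_nonneg (hw_pos d).le (hf_nonneg d x))
      (Finset.mem_univ c)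
  have hf_log c : Integrable (fun x => f c x * log (∑ d, w d * f d x)) :=
    h_int.mul_of_const_mul_le (hw_pos c) (hf_nonneg c) (hf_le_p c)
      (hf_meas c).aestronglyMeasurable
      (Finset.measurable_sum _ fun d _ => (hf_meas d).const_mul _).log.aestronglyMeasurable
  have h_overlap c : ∫ x, f c x * ∑ d, w d * f d x = ∑ d, w d * z c d := by
    simp_rw [mul_comm (f c _), integral_sum_mul (hff c), hz, mul_comm (f c _)]
  have h_jensen c : ∫ x, f c x * log (∑ d, w d * f d x) ≤ log (∑ d, w d * z c d) := by
    rw [← h_overlap]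
    refine integral_mul_log_le_log_integral_mul (hf_nonneg c) (hf_mass c)
      (fun x hx => (mul_pos (hw_pos c) hx).trans_le (hf_le_p c x)) ?_ (hf_log c)
    simp_rw [mul_comm (f c _)]
    exact integrable_sum_mul (hff c)
  rw [neg_le_neg_iff, integral_sum_mul hf_log]
  exact Finset.sum_le_sum fun c _ => mul_le_mul_of_nonneg_left (h_jensen c) (hw_pos c).le

/-- **Jensen/overlap lower bound on mixture entropy.**
Let `p = ∑ c, w c * f c` be a mixture of square-integrable probability densities on `ℝⁿ`
and let `z c d = ∫ f c * f d` be the pairwise overlap integrals. Then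
`h(p) ≥ -∑ c, w c * log (∑ d, w d * z c d)`. -/
theorem mixture_entropy_jensen_overlap_lower_bound
    (n K : ℕ) (hK : 1 ≤ K)
    (w : Fin K → ℝ) (hw_pos : ∀ c, 0 < w c) (hw_sum : ∑ c, w c = 1)
    (f : Fin K → (Fin n → ℝ) → ℝ)
    (hf_meas : ∀ c, Measurable (f c))
    (hf_nonneg : ∀ c x, 0 ≤ f c x)
    (hf_mass : ∀ c, ∫ x, f c x = 1)
    (hf_sq : ∀ c, Integrable (fun x => f c x ^ 2))
    (p : (Fin n → ℝ) → ℝ) (hp : ∀ x, p x = ∑ c, w c * f c x)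
    (z : Fin K → Fin K → ℝ) (hz : ∀ c d, z c d = ∫ x, f c x * f d x)
    (h_int : Integrable (fun x => p x * Real.log (p x))) :
    (-∑ c, w c * Real.log (∑ d, w d * z c d)) ≤ -∫ x, p x * Real.log (p x) :=
  mixture_entropy_jensen_overlap_lower_bound_general n K w hw_pos f hf_meas hf_nonneg hf_mass hf_sq
    p hp z hz h_int
end

section
/- Laplace–Laplace overlap integral with unequal scales: let μ₁, μ₂ ∈ ℝ and s₁, s₂ > 0 with s₁ ≠ s₂, set δ = |μ₁ - μ₂|, and let f_i(x) = (1/(2s_i)) exp( -|x-μ_i|/s_i ) for i = 1, 2. Then ∫_ℝ f₁(x) f₂(x) dx = ( s₁ e^{-δ/s₁} - s₂ e^{-δ/s₂} ) / ( 2 (s₁² - s₂²) ). -/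
/-!
Work with the rates `a = 1/s₁`, `b = 1/s₂`. After translating one centre to the origin and
reflecting so that the other one sits at `d ≥ 0`, the exponent `-(a |x - d| + b |x|)` is affine on
each of `(-∞, 0]`, `[0, d]` and `[d, ∞)`, so the integral is a sum of three elementary exponential
integrals: `e^{-ad}/(a+b) + (e^{-bd} - e^{-ad})/(a-b) + e^{-bd}/(a+b)`.
-/

open MeasureTheory Set Real

section
variable {a b : ℝ}

lemma eqOn_Iic_exp_neg_mul_abs_sub_mul_exp_neg_mul_abs {d : ℝ} (hd : 0 ≤ d) :
    EqOn (fun x => exp (-(a * |x - d|)) * exp (-(b * |x|)))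
      (fun x => exp (-(a * d)) * exp ((a + b) * x)) (Iic 0) := by
  intro x (hx : x ≤ 0)
  dsimp only
  rw [abs_of_nonpos (by linarith), abs_of_nonpos hx, ← exp_add, ← exp_add]
  ring_nf

lemma eqOn_Icc_exp_neg_mul_abs_sub_mul_exp_neg_mul_abs (d : ℝ) :
    EqOn (fun x => exp (-(a * |x - d|)) * exp (-(b * |x|)))
      (fun x => exp (-(a * d)) * exp ((a - b) * x)) (Icc 0 d) := by
  intro x ⟨hx₀, hxd⟩
  dsimp only
  rw [abs_of_nonpos (by linarith), abs_of_nonneg hx₀, ← exp_add, ← exp_add]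
  ring_nf

lemma eqOn_Ici_exp_neg_mul_abs_sub_mul_exp_neg_mul_abs {d : ℝ} (hd : 0 ≤ d) :
    EqOn (fun x => exp (-(a * |x - d|)) * exp (-(b * |x|)))
      (fun x => exp (a * d) * exp (-(a + b) * x)) (Ici d) := by
  intro x (hx : d ≤ x)
  dsimp only
  rw [abs_of_nonneg (by linarith), abs_of_nonneg (by linarith), ← exp_add, ← exp_add]
  ring_nf

lemma integral_exp_neg_mul_abs_sub_mul_exp_neg_mul_abs_of_nonneg (ha : 0 < a) (hb : 0 < b)
    (hab : a ≠ b) {d : ℝ} (hd : 0 ≤ d) :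
    ∫ x, exp (-(a * |x - d|)) * exp (-(b * |x|)) =
      2 * (a * exp (-(b * d)) - b * exp (-(a * d))) / (a ^ 2 - b ^ 2) := by
  set g := fun x => exp (-(a * |x - d|)) * exp (-(b * |x|))
  have hab' : 0 < a + b := by positivity
  have hIic := eqOn_Iic_exp_neg_mul_abs_sub_mul_exp_neg_mul_abs (a := a) (b := b) hd
  have hIcc := eqOn_Icc_exp_neg_mul_abs_sub_mul_exp_neg_mul_abs (a := a) (b := b) d
  have hIoi := (eqOn_Ici_exp_neg_mul_abs_sub_mul_exp_neg_mul_abs (a := a) (b := b) hd).mono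
    Ioi_subset_Ici_self
  have int_Iic : IntegrableOn g (Iic 0) := IntegrableOn.congr_fun
    ((integrableOn_exp_mul_Iic hab' 0).const_mul _) hIic.symm measurableSet_Iic
  have int_Ioc : IntegrableOn g (Ioc 0 d) := (by fun_prop : Continuous g).integrableOn_Ioc
  have int_Ioi : IntegrableOn g (Ioi d) := IntegrableOn.congr_fun
    ((integrableOn_exp_mul_Ioi (neg_neg_of_pos hab') d).const_mul _) hIoi.symm measurableSet_Ioi
  have h_Iic : ∫ x in Iic 0, g x = exp (-(a * d)) / (a + b) := by
    rw [setIntegral_congr_fun measurableSet_Iic hIic, integral_const_mul,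
      integral_exp_mul_Iic hab', mul_zero, exp_zero, mul_one_div]
  have h_Ioc : ∫ x in Ioc 0 d, g x = (exp (-(b * d)) - exp (-(a * d))) / (a - b) := by
    rw [← intervalIntegral.integral_of_le hd, intervalIntegral.integral_congr
      (hIcc.mono (uIcc_of_le hd).subset), intervalIntegral.integral_const_mul,
      intervalIntegral.integral_comp_mul_left _ (sub_ne_zero.2 hab), integral_exp,
      smul_eq_mul, mul_zero, exp_zero, mul_left_comm, mul_sub, ← exp_add, mul_one, inv_mul_eq_div]
    ring_nf
  have h_Ioi : ∫ x in Ioi d, g x = exp (-(b * d)) / (a + b) := by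
    rw [setIntegral_congr_fun measurableSet_Ioi hIoi, integral_const_mul,
      integral_exp_mul_Ioi (neg_neg_of_pos hab'), neg_div_neg_eq, ← mul_div_assoc, ← exp_add]
    ring_nf
  rw [← intervalIntegral.integral_Iic_add_Ioi int_Iic
      (Ioc_union_Ioi_eq_Ioi hd ▸ int_Ioc.union int_Ioi),
    ← Ioc_union_Ioi_eq_Ioi hd, setIntegral_union (Ioc_disjoint_Ioi le_rfl) measurableSet_Ioi
      int_Ioc int_Ioi, h_Iic, h_Ioc, h_Ioi]
  have : a - b ≠ 0 := sub_ne_zero.2 hab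
  rw [sq_sub_sq]
  field_simp
  ring

lemma integral_exp_neg_mul_abs_sub_mul_exp_neg_mul_abs (ha : 0 < a) (hb : 0 < b) (hab : a ≠ b)
    (d : ℝ) :
    ∫ x, exp (-(a * |x - d|)) * exp (-(b * |x|)) =
      2 * (a * exp (-(b * |d|)) - b * exp (-(a * |d|))) / (a ^ 2 - b ^ 2) := by
  rcases le_total 0 d with hd | hd
  · rw [abs_of_nonneg hd, integral_exp_neg_mul_abs_sub_mul_exp_neg_mul_abs_of_nonneg ha hb hab hd]
  · rw [abs_of_nonpos hd, ← integral_exp_neg_mul_abs_sub_mul_exp_neg_mul_abs_of_nonneg ha hb hab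
      (neg_nonneg.2 hd), ← integral_neg_eq_self]
    simp only [abs_neg, ← neg_add', sub_neg_eq_add]

lemma integral_exp_neg_mul_abs_sub_mul_exp_neg_mul_abs_sub (ha : 0 < a) (hb : 0 < b)
    (hab : a ≠ b) (μ₁ μ₂ : ℝ) :
    ∫ x, exp (-(a * |x - μ₁|)) * exp (-(b * |x - μ₂|)) =
      2 * (a * exp (-(b * |μ₁ - μ₂|)) - b * exp (-(a * |μ₁ - μ₂|))) / (a ^ 2 - b ^ 2) := by
  rw [← integral_exp_neg_mul_abs_sub_mul_exp_neg_mul_abs ha hb hab,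
    ← integral_add_right_eq_self _ μ₂]
  simp only [add_sub_cancel_right, sub_sub_eq_add_sub]

end

/-- **Laplace–Laplace overlap integral with unequal scales.**
For Laplace densities with locations `μ₁, μ₂` and distinct scales `s₁ ≠ s₂`, with
`δ = |μ₁ - μ₂|`, one has `∫ f₁ f₂ = (s₁ e^{-δ/s₁} - s₂ e^{-δ/s₂}) / (2 (s₁² - s₂²))`. -/
theorem laplace_laplace_overlap_unequal_scales
    (μ₁ μ₂ s₁ s₂ : ℝ) (hs₁ : 0 < s₁) (hs₂ : 0 < s₂) (hne : s₁ ≠ s₂)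
    (δ : ℝ) (hδ : δ = |μ₁ - μ₂|)
    (f₁ f₂ : ℝ → ℝ)
    (hf₁ : ∀ x, f₁ x = (1 / (2 * s₁)) * Real.exp (-|x - μ₁| / s₁))
    (hf₂ : ∀ x, f₂ x = (1 / (2 * s₂)) * Real.exp (-|x - μ₂| / s₂)) :
    (∫ x, f₁ x * f₂ x) =
      (s₁ * Real.exp (-δ / s₁) - s₂ * Real.exp (-δ / s₂)) / (2 * (s₁ ^ 2 - s₂ ^ 2)) := by
  have h_rate (y s : ℝ) : -y / s = -(s⁻¹ * y) := by ring
  have h_prod (x : ℝ) : f₁ x * f₂ x =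
      (4 * s₁ * s₂)⁻¹ * (exp (-(s₁⁻¹ * |x - μ₁|)) * exp (-(s₂⁻¹ * |x - μ₂|))) := by
    rw [hf₁, hf₂, h_rate, h_rate]
    field_simp
    ring
  simp only [h_prod, integral_const_mul, integral_exp_neg_mul_abs_sub_mul_exp_neg_mul_abs_sub
    (inv_pos.2 hs₁) (inv_pos.2 hs₂) (inv_injective.ne hne), ← hδ, h_rate]
  have : s₁ - s₂ ≠ 0 := sub_ne_zero.2 hne
  have : s₂ - s₁ ≠ 0 := sub_ne_zero.2 hne.symm
  rw [sq_sub_sq, sq_sub_sq]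
  field_simp
  ring
end

section
/- Gaussian–Laplace overlap integral in one dimension: let μ_g, μ_ℓ ∈ ℝ, σ > 0, b > 0, and set δ = μ_g - μ_ℓ. Let g(x) = (1/(σ√(2π))) exp( -(x-μ_g)²/(2σ²) ) be the Gaussian density and f(x) = (1/(2b)) exp( -|x-μ_ℓ|/b ) the Laplace density, and let Φ(t) = ∫_{-∞}^{t} (1/√(2π)) e^{-u²/2} du denote the standard normal cumulative distribution function. Then ∫_ℝ g(x) f(x) dx = ( e^{σ²/(2b²)} / (2b) ) [ e^{δ/b} Φ( (-δ - σ²/b)/σ ) + e^{-δ/b} Φ( (δ - σ²/b)/σ ) ]. -/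
open MeasureTheory Real

/-- The standard normal cumulative distribution function. -/
noncomputable def stdNormalCDF (t : ℝ) : ℝ :=
  ∫ u in Set.Iic t, (1 / Real.sqrt (2 * π)) * Real.exp (-u ^ 2 / 2)

open Set

/-!
Split the integral at `μℓ`. On each half-line the Laplace factor is `exp (±(x - μℓ) / b)`, and
completing the square turns the Gaussian times this exponential into the constant
`exp (σ² / (2b²) ± δ / b)` times a Gaussian density with mean `μg ± σ² / b`. The affine
substitution `x = σ u + m` identifies the integral of a Gaussian density over `Iic c` with
`Φ ((c - m) / σ)`, and reflection `x ↦ -x` handles `Ioi c`.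
-/

noncomputable def gaussianDensity (m σ x : ℝ) : ℝ :=
  1 / (σ * √(2 * π)) * exp (-(x - m) ^ 2 / (2 * σ ^ 2))

lemma gaussianDensity_neg (m σ x : ℝ) : gaussianDensity m σ (-x) = gaussianDensity (-m) σ x := by
  unfold gaussianDensity
  ring_nf

lemma integrable_gaussianDensity (m : ℝ) {σ : ℝ} (hσ : σ ≠ 0) :
    Integrable (gaussianDensity m σ) := by
  have hexp : Integrable fun x : ℝ => exp (-(1 / (2 * σ ^ 2)) * (x - m) ^ 2) :=
    (integrable_exp_neg_mul_sq (by positivity)).comp_sub_right m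
  refine (hexp.const_mul (1 / (σ * √(2 * π)))).congr (ae_of_all _ fun x => ?_)
  simp only [gaussianDensity]
  congr 2
  ring

lemma gaussianDensity_mul_exp (m k a x : ℝ) {σ : ℝ} (hσ : σ ≠ 0) :
    gaussianDensity m σ x * exp (k * (x - a)) =
      exp (k * (m - a) + k ^ 2 * σ ^ 2 / 2) * gaussianDensity (m + k * σ ^ 2) σ x := by
  simp only [gaussianDensity]
  rw [mul_assoc, ← exp_add, mul_left_comm, ← exp_add]
  congr 2
  field_simp
  ring

lemma integral_Iic_gaussianDensity (m c : ℝ) {σ : ℝ} (hσ : 0 < σ) :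
    ∫ x in Iic c, gaussianDensity m σ x = stdNormalCDF ((c - m) / σ) := by
  have himg : (fun u : ℝ => σ * u + m) '' Iic ((c - m) / σ) = Iic c := by
    ext x
    simp only [mem_image, mem_Iic]
    constructor
    · rintro ⟨u, hu, rfl⟩
      rw [le_div_iff₀ hσ, mul_comm] at hu
      linarith
    · exact fun hx => ⟨(x - m) / σ, by gcongr, by field_simp; ring⟩
  rw [← himg, integral_image_eq_integral_abs_deriv_smul (f := fun u => σ * u + m)
      (f' := fun _ => σ) measurableSet_Iic
      (fun u _ => ((hasDerivAt_id u).const_mul σ |>.add_const m).hasDerivWithinAt.congr_deriv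
        (mul_one σ))
      (fun u _ v _ h => mul_left_cancel₀ hσ.ne' (add_right_cancel h))]
  refine setIntegral_congr_fun measurableSet_Iic fun u _ => ?_
  have hexponent : -(σ * u + m - m) ^ 2 / (2 * σ ^ 2) = -u ^ 2 / 2 := by
    field_simp
    ring
  rw [smul_eq_mul, abs_of_pos hσ, gaussianDensity, hexponent]
  field_simp

lemma integral_Ioi_gaussianDensity (m c : ℝ) {σ : ℝ} (hσ : 0 < σ) :
    ∫ x in Ioi c, gaussianDensity m σ x = stdNormalCDF ((m - c) / σ) := by
  calc ∫ x in Ioi c, gaussianDensity m σ x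
      = ∫ x in Ioi c, gaussianDensity (-m) σ (-x) := by simp_rw [gaussianDensity_neg, neg_neg]
    _ = ∫ x in Iic (-c), gaussianDensity (-m) σ x := integral_comp_neg_Ioi c _
    _ = stdNormalCDF ((m - c) / σ) := by
      rw [integral_Iic_gaussianDensity _ _ hσ, sub_neg_eq_add, neg_add_eq_sub]

lemma integrable_gaussianDensity_mul_exp (m k a : ℝ) {σ : ℝ} (hσ : σ ≠ 0) :
    Integrable fun x => gaussianDensity m σ x * exp (k * (x - a)) :=
  ((integrable_gaussianDensity _ hσ).const_mul _).congr
    (ae_of_all _ fun x => (gaussianDensity_mul_exp m k a x hσ).symm)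

lemma integral_Iic_gaussianDensity_mul_exp (m k a : ℝ) {σ : ℝ} (hσ : 0 < σ) :
    ∫ x in Iic a, gaussianDensity m σ x * exp (k * (x - a)) =
      exp (k * (m - a) + k ^ 2 * σ ^ 2 / 2) * stdNormalCDF ((a - (m + k * σ ^ 2)) / σ) := by
  simp_rw [gaussianDensity_mul_exp m k a _ hσ.ne', integral_const_mul,
    integral_Iic_gaussianDensity _ _ hσ]

lemma integral_Ioi_gaussianDensity_mul_exp (m k a : ℝ) {σ : ℝ} (hσ : 0 < σ) :
    ∫ x in Ioi a, gaussianDensity m σ x * exp (k * (x - a)) =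
      exp (k * (m - a) + k ^ 2 * σ ^ 2 / 2) * stdNormalCDF ((m + k * σ ^ 2 - a) / σ) := by
  simp_rw [gaussianDensity_mul_exp m k a _ hσ.ne', integral_const_mul,
    integral_Ioi_gaussianDensity _ _ hσ]

theorem gaussian_laplace_overlap_integral_general
    (μg μℓ σ b : ℝ) (hσ : 0 < σ) (δ : ℝ) (hδ : δ = μg - μℓ)
    (g f : ℝ → ℝ)
    (hg : ∀ x, g x = (1 / (σ * Real.sqrt (2 * π))) * Real.exp (-(x - μg) ^ 2 / (2 * σ ^ 2)))
    (hf : ∀ x, f x = (1 / (2 * b)) * Real.exp (-|x - μℓ| / b)) :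
    (∫ x, g x * f x) =
      (Real.exp (σ ^ 2 / (2 * b ^ 2)) / (2 * b)) *
        (Real.exp (δ / b) * stdNormalCDF ((-δ - σ ^ 2 / b) / σ) +
         Real.exp (-δ / b) * stdNormalCDF ((δ - σ ^ 2 / b) / σ)) := by
  have hleft : EqOn (fun x => g x * f x)
      (fun x => (2 * b)⁻¹ * (gaussianDensity μg σ x * exp (b⁻¹ * (x - μℓ)))) (Iic μℓ) := by
    intro x hx
    dsimp only
    rw [hg, hf, abs_of_nonpos (sub_nonpos.2 hx), gaussianDensity, neg_neg,
      div_eq_inv_mul (x - μℓ)]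
    ring
  have hright : EqOn (fun x => g x * f x)
      (fun x => (2 * b)⁻¹ * (gaussianDensity μg σ x * exp (-b⁻¹ * (x - μℓ)))) (Ioi μℓ) := by
    intro x hx
    dsimp only
    rw [hg, hf, abs_of_pos (sub_pos.2 hx), gaussianDensity, neg_div b, neg_mul,
      div_eq_inv_mul (x - μℓ)]
    ring
  have hintegrable (k : ℝ) (s : Set ℝ) :=
    ((integrable_gaussianDensity_mul_exp μg k μℓ hσ.ne').const_mul (2 * b)⁻¹).integrableOn (s := s)
  rw [← intervalIntegral.integral_Iic_add_Ioi
      ((hintegrable _ _).congr_fun hleft.symm measurableSet_Iic)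
      ((hintegrable _ _).congr_fun hright.symm measurableSet_Ioi),
    setIntegral_congr_fun measurableSet_Iic hleft, setIntegral_congr_fun measurableSet_Ioi hright,
    integral_const_mul, integral_const_mul, integral_Iic_gaussianDensity_mul_exp _ _ _ hσ,
    integral_Ioi_gaussianDensity_mul_exp _ _ _ hσ]
  subst hδ
  ring_nf
  simp only [exp_add]
  ring

/-- **Gaussian–Laplace overlap integral in one dimension.**
For a Gaussian density `g` with mean `μg` and standard deviation `σ > 0` and a Laplace
density `f` with location `μℓ` and scale `b > 0`, with `δ = μg - μℓ`,
`∫ g f = (e^{σ²/(2b²)}/(2b)) [ e^{δ/b} Φ((-δ - σ²/b)/σ) + e^{-δ/b} Φ((δ - σ²/b)/σ) ]`,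
where `Φ` is the standard normal CDF. -/
theorem gaussian_laplace_overlap_integral
    (μg μℓ σ b : ℝ) (hσ : 0 < σ) (hb : 0 < b) (δ : ℝ) (hδ : δ = μg - μℓ)
    (g f : ℝ → ℝ)
    (hg : ∀ x, g x = (1 / (σ * Real.sqrt (2 * π))) * Real.exp (-(x - μg) ^ 2 / (2 * σ ^ 2)))
    (hf : ∀ x, f x = (1 / (2 * b)) * Real.exp (-|x - μℓ| / b)) :
    (∫ x, g x * f x) =
      (Real.exp (σ ^ 2 / (2 * b ^ 2)) / (2 * b)) *
        (Real.exp (δ / b) * stdNormalCDF ((-δ - σ ^ 2 / b) / σ) +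
         Real.exp (-δ / b) * stdNormalCDF ((δ - σ ^ 2 / b) / σ)) :=
  gaussian_laplace_overlap_integral_general μg μℓ σ b hσ δ hδ g f hg hf
end
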